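/- arXiv:2004.14904 — 6 statements merged into one kernel-verified Lean document; each statement's English description precedes it below -/
import Mathlib

section
/- For every integer m ≥ 1, there exist rational coefficients b̂_1, ..., b̂_m such that B_{2m+1}(x) = (x - 1/2) Σ_{j=1}^m b̂_j U(x)^j, where U(x) = x(x-1)/2. -/
/-!
By the reflection formula `B_n(1 - x) = (-1)^n B_n(x)`, the polynomial `B_{2m+1}` is antisymmetric
under `x ↦ 1 - x`, so it vanishes at `1/2` and its quotient by `x - 1/2` is symmetric. A symmetric
polynomial `r` is a polynomial in `x (x - 1)`: `r - r(0)` vanishes at `0` and at `1`, hence is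
`x (x - 1)` times a symmetric polynomial of smaller degree. The resulting polynomial in `U` has no
constant term because `B_{2m+1}(0) = 0` for `m ≥ 1`.
-/

open Polynomial

section Symmetric

variable {R : Type*} [CommRing R]

theorem X_mul_X_sub_one_dvd {p : R[X]} (h₀ : p.eval 0 = 0) (h₁ : p.eval 1 = 0) :
    X * (X - 1) ∣ p := by
  obtain ⟨t, rfl⟩ := (X_dvd_iff (f := p)).mpr (by rwa [coeff_zero_eq_eval_zero])
  have ht : X - C 1 ∣ t := dvd_iff_isRoot.mpr (by simpa using h₁)
  simpa using mul_dvd_mul_left X ht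

theorem monic_X_mul_X_sub_one [Nontrivial R] : (X * (X - 1) : R[X]).Monic :=
  monic_X.mul (by simpa using monic_X_sub_C (1 : R))

theorem natDegree_X_mul_X_sub_one [Nontrivial R] : (X * (X - 1) : R[X]).natDegree = 2 := by
  rw [monic_X.natDegree_mul (by simpa using monic_X_sub_C (1 : R)), natDegree_X,
    show (X - 1 : R[X]) = X - C 1 by simp, natDegree_X_sub_C]

theorem X_mul_X_sub_one_comp_one_sub_X : (X * (X - 1) : R[X]).comp (1 - X) = X * (X - 1) := by
  simp only [mul_comp, sub_comp, X_comp, one_comp]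
  ring

theorem exists_natDegree_le_eq_comp_X_mul_X_sub_one_of_comp_one_sub_X_eq :
    ∀ (k : ℕ) {r : R[X]}, r.comp (1 - X) = r → r.natDegree ≤ 2 * k →
      ∃ q : R[X], q.natDegree ≤ k ∧ r = q.comp (X * (X - 1))
  | 0, r, _, hdeg => ⟨C (r.coeff 0), by simp, by rw [C_comp, ← eq_C_of_natDegree_le_zero hdeg]⟩
  | k + 1, r, hr, hdeg => by
    nontriviality R
    have hr₁ : r.eval 1 = r.eval 0 := by simpa using congrArg (eval 0) hr
    obtain ⟨s, hs⟩ : X * (X - 1) ∣ r - C (r.eval 0) :=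
      X_mul_X_sub_one_dvd (by simp) (by simp [hr₁])
    have hs_symm : s.comp (1 - X) = s := by
      apply monic_X_mul_X_sub_one.isRegular.left
      calc X * (X - 1) * s.comp (1 - X) = (X * (X - 1) * s).comp (1 - X) := by
            rw [mul_comp, X_mul_X_sub_one_comp_one_sub_X]
        _ = X * (X - 1) * s := by rw [← hs, sub_comp, hr, C_comp]
    have hs_deg : s.natDegree ≤ 2 * k := by
      rcases eq_or_ne s 0 with rfl | hs₀
      · simp
      have := congrArg natDegree hs
      rw [natDegree_sub_C, monic_X_mul_X_sub_one.natDegree_mul' hs₀,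
        natDegree_X_mul_X_sub_one] at this
      omega
    obtain ⟨q, hq_deg, rfl⟩ :=
      exists_natDegree_le_eq_comp_X_mul_X_sub_one_of_comp_one_sub_X_eq k hs_symm hs_deg
    refine ⟨C (r.eval 0) + X * q, ?_, ?_⟩
    · refine (natDegree_add_le _ _).trans (max_le (by simp) ?_)
      exact natDegree_mul_le.trans (by rw [natDegree_X]; omega)
    · simp only [add_comp, C_comp, mul_comp, X_comp]
      linear_combination hs

end Symmetric

section Antisymmetric

variable {K : Type*} [Field K] [NeZero (2 : K)]

theorem exists_natDegree_le_eq_X_sub_C_mul_comp_of_comp_one_sub_X_eq_neg {m : ℕ} {p : K[X]}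
    (hp : p.comp (1 - X) = -p) (hdeg : p.natDegree ≤ 2 * m + 1) :
    ∃ q : K[X], q.natDegree ≤ m ∧ p = (X - C (1 / 2)) * q.comp (X * (X - 1)) := by
  have hroot : p.IsRoot (1 / 2) := by
    have h := congrArg (eval (1 / 2)) hp
    rw [eval_comp, eval_neg] at h
    simp only [eval_sub, eval_one, eval_X, sub_half] at h
    have : (2 : K) * p.eval (1 / 2) = 0 := by linear_combination h
    exact (mul_eq_zero.mp this).resolve_left two_ne_zero
  obtain ⟨r, hr⟩ := dvd_iff_isRoot.mpr hroot
  have hr_symm : r.comp (1 - X) = r := by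
    apply mul_left_cancel₀ (X_sub_C_ne_zero (1 / 2 : K))
    have h₁ : (1 : K[X]) = C (1 / 2) + C (1 / 2) := by rw [← C_add, add_halves, C_1]
    rw [hr, mul_comp, sub_comp, X_comp, C_comp] at hp
    linear_combination -hp + r.comp (1 - X) * h₁
  have hr_deg : r.natDegree ≤ 2 * m := by
    rcases eq_or_ne r 0 with rfl | hr₀
    · simp
    rw [hr, (monic_X_sub_C _).natDegree_mul' hr₀, natDegree_X_sub_C] at hdeg
    omega
  obtain ⟨q, hq_deg, rfl⟩ :=
    exists_natDegree_le_eq_comp_X_mul_X_sub_one_of_comp_one_sub_X_eq m hr_symm hr_deg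
  exact ⟨q, hq_deg, hr⟩

end Antisymmetric

theorem Polynomial.natDegree_bernoulli_le (n : ℕ) : (bernoulli n).natDegree ≤ n :=
  natDegree_sum_le_of_forall_le _ _ fun _ _ => (natDegree_monomial_le _).trans (Nat.sub_le _ _)

theorem bernoulli_odd_faulhaber_form (m : ℕ) (hm : 1 ≤ m) :
    ∃ b : ℕ → ℚ, ∀ x : ℚ,
      (Polynomial.bernoulli (2 * m + 1)).eval x =
        (x - 1 / 2) * ∑ j ∈ Finset.Icc 1 m, b j * (x * (x - 1) / 2) ^ j := by
  have hodd : Odd (2 * m + 1) := odd_two_mul_add_one m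
  obtain ⟨q, hq_deg, hq⟩ := exists_natDegree_le_eq_X_sub_C_mul_comp_of_comp_one_sub_X_eq_neg
    (by rw [bernoulli_comp_one_sub_X, hodd.neg_one_pow, neg_one_mul]) (natDegree_bernoulli_le _)
  have hq₀ : q.coeff 0 = 0 := by
    have h := congrArg (eval 0) hq
    rw [bernoulli_eval_zero, bernoulli_eq_zero_of_odd hodd (by omega)] at h
    simpa [coeff_zero_eq_eval_zero] using h
  refine ⟨fun j => 2 ^ j * q.coeff j, fun x => ?_⟩
  rw [hq, eval_mul, eval_comp, eval_eq_sum_range' (show q.natDegree < m + 1 by omega),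
    Finset.sum_range_eq_add_Ico _ (by omega : 0 < m + 1), Finset.Ico_add_one_right_eq_Icc]
  simp only [eval_sub, eval_X, eval_C, eval_mul, eval_one, hq₀, zero_mul, zero_add]
  congr 1
  refine Finset.sum_congr rfl fun j _ => ?_
  rw [div_pow]
  field_simp
end

section
/- For every integer m ≥ 1 there exists a polynomial F of degree m-1 with rational coefficients such that for all integers n ≥ 1, Σ_{i=1}^n i^{2m} = S_2 · F(S_1), where S_1 = n(n+1)/2 and S_2 = n(n+1)(2n+1)/6. -/
/-!
Shifting the Bernoulli polynomial `B = B_{2m+1}` by `1/2` makes it odd, because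
`B(1 - x) = -B(x)`; hence `B(y + 1/2) = y · E(y²)` with `deg E = m`, and `E(1/4) = 0` since
`B(1) = 0`. Faulhaber gives `(2m+1) · Σ_{i ≤ n} i^{2m} = B(n + 1)`, and at `y = n + 1/2` we have
`y² = 2 S₁ + 1/4`, so the sum is `(n + 1/2) · E(2 S₁ + 1/4)`, where `E(2s + 1/4)` is divisible by
`s` and `(n + 1/2) · S₁` is a multiple of `S₂`.
-/

namespace Polynomial

section OddPolynomial

variable {R : Type*} [CommRing R]

theorem expand_contract_of_coeff_eq_zero {p : ℕ} (hp : p ≠ 0) {f : R[X]}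
    (hf : ∀ n, ¬ p ∣ n → f.coeff n = 0) : expand R p (contract p f) = f := by
  ext n
  rw [coeff_expand hp.bot_lt, coeff_contract hp]
  split_ifs with h
  · rw [Nat.div_mul_cancel h]
  · exact (hf n h).symm

variable [NoZeroDivisors R] [NeZero (2 : R)]

theorem coeff_eq_zero_of_comp_neg_X_eq_neg {f : R[X]} (hf : f.comp (-X) = -f) {n : ℕ}
    (hn : Even n) : f.coeff n = 0 := by
  have h := congrArg (coeff · n) hf
  rw [← neg_one_mul (X : R[X]), ← C_1, ← C_neg, comp_C_mul_X_coeff, hn.neg_one_pow, mul_one,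
    coeff_neg, eq_neg_iff_add_eq_zero, ← two_mul] at h
  exact (mul_eq_zero.1 h).resolve_left two_ne_zero

theorem eq_X_mul_expand_two_of_comp_neg_X_eq_neg {f : R[X]} (hf : f.comp (-X) = -f) :
    f = X * expand R 2 (contract 2 f.divX) := by
  rw [expand_contract_of_coeff_eq_zero two_ne_zero]
  · conv_lhs => rw [← X_mul_divX_add f, coeff_eq_zero_of_comp_neg_X_eq_neg hf Even.zero, C_0,
      add_zero]
  · intro n hn
    rw [coeff_divX]
    exact coeff_eq_zero_of_comp_neg_X_eq_neg hf (by grind)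

end OddPolynomial

theorem natDegree_bernoulli (n : ℕ) : (bernoulli n).natDegree = n :=
  natDegree_eq_of_le_of_coeff_ne_zero
    (natDegree_le_iff_coeff_eq_zero.2 fun i hi => by
      rw [coeff_bernoulli, if_neg (not_le.2 (by exact_mod_cast hi))])
    (by simp [coeff_bernoulli])

theorem bernoulli_comp_X_add_half_comp_neg_X {n : ℕ} (hn : Odd n) :
    ((bernoulli n).comp (X + C 2⁻¹)).comp (-X) = -(bernoulli n).comp (X + C 2⁻¹) := by
  refine Polynomial.funext fun x => ?_
  simp only [eval_comp, eval_neg, eval_add, eval_X, eval_C]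
  rw [show -x + 2⁻¹ = 1 - (x + 2⁻¹) by ring, bernoulli_eval_one_sub, hn.neg_one_pow, neg_one_mul]

theorem sum_Icc_pow_eq_bernoulli_eval {p : ℕ} (hp : p ≠ 0) (n : ℕ) :
    (p + 1 : ℚ) * ∑ i ∈ Finset.Icc 1 n, (i : ℚ) ^ p =
      (bernoulli (p + 1)).eval (n + 1 : ℚ) - _root_.bernoulli (p + 1) := by
  have h := sum_range_pow_eq_bernoulli_sub (n + 1) p
  push_cast at h
  rw [← h, Finset.range_eq_Ico, Finset.sum_eq_sum_Ico_succ_bot n.succ_pos]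
  simp [hp, Finset.Ico_add_one_right_eq_Icc]

theorem exists_bernoulli_two_mul_add_one_eval_add_half {m : ℕ} (hm : m ≠ 0) :
    ∃ E : ℚ[X], E.natDegree = m ∧ E.eval 4⁻¹ = 0 ∧
      ∀ x : ℚ, (bernoulli (2 * m + 1)).eval (x + 2⁻¹) = x * E.eval (x ^ 2) := by
  set B := (bernoulli (2 * m + 1)).comp (X + C 2⁻¹)
  have hB := eq_X_mul_expand_two_of_comp_neg_X_eq_neg
    (bernoulli_comp_X_add_half_comp_neg_X (odd_two_mul_add_one m))
  set E := contract 2 B.divX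
  have hE : ∀ x : ℚ, (bernoulli (2 * m + 1)).eval (x + 2⁻¹) = x * E.eval (x ^ 2) := fun x => by
    simpa [B, eval_comp, expand_eval] using congrArg (eval x) hB
  refine ⟨E, ?_, ?_, hE⟩
  · have h := congrArg natDegree hB
    rw [natDegree_comp, natDegree_bernoulli, natDegree_X_add_C, mul_one] at h
    have hE0 : E ≠ 0 := by intro hE0; simp [hE0] at h
    rw [natDegree_X_mul ((expand_ne_zero two_pos).2 hE0), natDegree_expand] at h
    omega
  · have h := hE 2⁻¹
    rw [show (2⁻¹ + 2⁻¹ : ℚ) = 1 by norm_num, bernoulli_eval_one,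
      bernoulli'_eq_zero_of_odd (odd_two_mul_add_one m) (by omega)] at h
    norm_num at h
    rwa [one_div] at h

end Polynomial

open Polynomial

theorem faulhaber_even (m : ℕ) (hm : 1 ≤ m) :
    ∃ F : Polynomial ℚ, F.natDegree = m - 1 ∧
      ∀ n : ℕ, 1 ≤ n →
        (∑ i ∈ Finset.Icc 1 n, (i : ℚ) ^ (2 * m)) =
          ((n : ℚ) * (n + 1) * (2 * n + 1) / 6) * F.eval ((n : ℚ) * (n + 1) / 2) := by
  obtain ⟨E, hE_deg, hE_root, hE⟩ := 
    exists_bernoulli_two_mul_add_one_eval_add_half (Nat.one_le_iff_ne_zero.mp hm)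
  set G := E.comp (C 2 * X + C 4⁻¹)
  have hG0 : G.coeff 0 = 0 := by simp [G, coeff_zero_eq_eval_zero, eval_comp, hE_root]
  have hG : ∀ s : ℚ, E.eval (2 * s + 4⁻¹) = s * G.divX.eval s := fun s => by
    simpa [G, hG0, eval_comp] using (congrArg (eval s) (X_mul_divX_add G)).symm
  refine ⟨C (3 / (4 * m + 2) : ℚ) * G.divX, ?_, fun n _ => ?_⟩
  · rw [natDegree_C_mul (by positivity), natDegree_divX_eq_natDegree_tsub_one, natDegree_comp,
      natDegree_linear two_ne_zero, hE_deg, mul_one]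
  · have hsum := sum_Icc_pow_eq_bernoulli_eval (p := 2 * m) (by omega) n
    rw [bernoulli_eq_zero_of_odd (odd_two_mul_add_one m) (by omega), sub_zero,
      show (n + 1 : ℚ) = (n + 2⁻¹) + 2⁻¹ by ring, hE,
      show ((n : ℚ) + 2⁻¹) ^ 2 = 2 * (n * (n + 1) / 2) + 4⁻¹ by ring, hG] at hsum
    rw [eval_mul, eval_C]
    push_cast at hsum
    field_simp at hsum ⊢
    linear_combination 3 * hsum
end

section
/- For every integer m ≥ 1 there exists a polynomial F of degree m-1 with rational coefficients such that for all integers n ≥ 1, Σ_{i=1}^n i^{2m+1} = S_1^2 · F(S_1), where S_1 = n(n+1)/2. -/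
/-!
Summing the identity `(i(i+1))^(m+1) - ((i-1)i)^(m+1) = i^(m+1) ((i+1)^(m+1) - (i-1)^(m+1))`
over `i = 1, …, n` and expanding binomially gives
`(2 S₁)^(m+1) = 2 (m+1) Σ i^(2m+1) + Σ_{j ≥ 1} 2 C(m+1, 2j+1) Σ i^(2(m-j)+1)`,
since only odd binomial indices survive. By strong induction on `m` the lower odd power sums are
`S₁² F(S₁)` with `deg F < m - 1`, so the top one is `S₁² F(S₁)` with
`F = (2^m X^(m-1) - …) / (m+1)`, of degree exactly `m - 1`.
-/

open Polynomial Finset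

theorem mul_add_one_pow_sub_sub_one_mul_pow {R : Type*} [CommRing R] (x : R) (M : ℕ) :
    (x * (x + 1)) ^ M - ((x - 1) * x) ^ M =
      ∑ k ∈ range (M + 1), (1 - (-1) ^ k) * (M.choose k : R) * x ^ (2 * M - k) := by
  rw [show (x * (x + 1)) ^ M - ((x - 1) * x) ^ M = x ^ M * ((1 + x) ^ M - (-1 + x) ^ M) by
      rw [mul_pow, mul_pow]; ring,
    add_pow, add_pow, ← sum_sub_distrib, mul_sum]
  refine sum_congr rfl fun k hk => ?_
  rw [show 2 * M - k = M + (M - k) by have := mem_range.mp hk; omega, pow_add]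
  ring

theorem mul_add_one_pow_eq_sum_choose_mul_sum_Icc_pow {R : Type*} [CommRing R] {M : ℕ}
    (hM : M ≠ 0) (n : ℕ) :
    ((n : R) * (n + 1)) ^ M =
      ∑ k ∈ range (M + 1), (1 - (-1) ^ k) * (M.choose k : R) *
        ∑ i ∈ Icc 1 n, (i : R) ^ (2 * M - k) := by
  induction n with
  | zero => simp [hM]
  | succ n ih =>
    have hstep := mul_add_one_pow_sub_sub_one_mul_pow ((n + 1 : ℕ) : R) M
    simp only [sum_Icc_succ_top (Nat.le_add_left 1 n), mul_add, sum_add_distrib, ← ih, ← hstep]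
    push_cast
    ring

theorem mul_add_one_pow_succ_eq_sum_Icc_pow (m n : ℕ) :
    2 * (m + 1) * ∑ i ∈ Icc 1 n, (i : ℚ) ^ (2 * m + 1) +
      ∑ k ∈ Ico 2 (m + 2), (1 - (-1) ^ k) * ((m + 1).choose k : ℚ) *
        ∑ i ∈ Icc 1 n, (i : ℚ) ^ (2 * m + 2 - k) =
      ((n : ℚ) * (n + 1)) ^ (m + 1) := by
  rw [mul_add_one_pow_eq_sum_choose_mul_sum_Icc_pow m.succ_ne_zero, range_eq_Ico,
    sum_eq_sum_Ico_succ_bot (show 0 < m + 1 + 1 by omega),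
    sum_eq_sum_Ico_succ_bot (show 0 + 1 < m + 1 + 1 by omega)]
  simp only [pow_zero, sub_self, zero_mul, zero_add, pow_one, Nat.choose_one_right,
    show 2 * (m + 1) = 2 * m + 2 by ring]
  push_cast
  ring

theorem natDegree_C_mul_X_pow_sub_of_degree_lt {R : Type*} [Ring R] {a : R} (ha : a ≠ 0)
    {d : ℕ} {q : R[X]} (hq : q.degree < d) : (C a * X ^ d - q).natDegree = d := by
  have hlead : (C a * X ^ d).degree = (d : WithBot ℕ) := degree_C_mul_X_pow d ha
  exact natDegree_eq_of_degree_eq_some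
    ((degree_sub_eq_left_of_degree_lt (hlead ▸ hq)).trans hlead)

theorem odd_mem_Ico_two_bounds {m k : ℕ} (hk : k ∈ Ico 2 (m + 2)) (hk_odd : Odd k) :
    1 ≤ m - k / 2 ∧ m - k / 2 < m ∧ 2 * m + 2 - k = 2 * (m - k / 2) + 1 := by
  obtain ⟨j, rfl⟩ := hk_odd
  have := mem_Ico.mp hk
  omega

theorem exists_sum_Icc_pow_odd_eq_sq_mul_eval (m : ℕ) (hm : 1 ≤ m) :
    ∃ F : ℚ[X], F.natDegree = m - 1 ∧ ∀ n : ℕ,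
      ∑ i ∈ Icc 1 n, (i : ℚ) ^ (2 * m + 1) =
        ((n : ℚ) * (n + 1) / 2) ^ 2 * F.eval ((n : ℚ) * (n + 1) / 2) := by
  induction m using Nat.strong_induction_on with
  | _ m ih =>
  choose! F hF_deg hF using ih
  set c : ℕ → ℚ := fun k => (1 - (-1) ^ k) * (m + 1).choose k
  have hc_even {k : ℕ} (hk : Even k) : c k = 0 := by simp [c, hk.neg_one_pow]
  set R : ℚ[X] := ∑ k ∈ Ico 2 (m + 2), c k • F (m - k / 2)
  have hR_deg : R.degree < (m - 1 : ℕ) := by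
    refine mem_degreeLT.mp (Submodule.sum_mem _ fun k hk => ?_)
    rcases Nat.even_or_odd k with hk_even | hk_odd
    · simp [hc_even hk_even]
    · obtain ⟨ht1, htm, -⟩ := odd_mem_Ico_two_bounds hk hk_odd
      refine Submodule.smul_mem _ _ (mem_degreeLT.mpr ((degree_le_natDegree).trans_lt ?_))
      rw [hF_deg _ htm ht1]
      exact_mod_cast (by omega : m - k / 2 - 1 < m - 1)
  refine ⟨C (2 * (m + 1 : ℚ))⁻¹ * (C (2 ^ (m + 1) : ℚ) * X ^ (m - 1) - R), ?_,
    fun n => ?_⟩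
  · rw [natDegree_C_mul (by positivity)]
    exact natDegree_C_mul_X_pow_sub_of_degree_lt (by positivity) hR_deg
  · set S : ℚ := (n : ℚ) * (n + 1) / 2
    have hR_eval : ∑ k ∈ Ico 2 (m + 2), c k * ∑ i ∈ Icc 1 n, (i : ℚ) ^ (2 * m + 2 - k) =
        S ^ 2 * R.eval S := by
      simp only [R, eval_finsetSum, eval_smul, smul_eq_mul]
      rw [mul_sum]
      refine sum_congr rfl fun k hk => ?_
      rcases Nat.even_or_odd k with hk_even | hk_odd
      · simp [hc_even hk_even]
      · obtain ⟨ht1, htm, hexp⟩ := odd_mem_Ico_two_bounds hk hk_odd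
        rw [hexp, hF _ htm ht1]
        ring
    have hrec := mul_add_one_pow_succ_eq_sum_Icc_pow m n
    rw [hR_eval, show (n : ℚ) * (n + 1) = 2 * S by ring] at hrec
    have hSpow : S ^ (m + 1) = S ^ 2 * S ^ (m - 1) := by rw [← pow_add]; congr 1; omega
    rw [mul_pow, hSpow] at hrec
    simp only [eval_mul, eval_C, eval_sub, eval_pow, eval_X]
    field_simp
    linear_combination hrec

theorem faulhaber_odd (m : ℕ) (hm : 1 ≤ m) :
    ∃ F : Polynomial ℚ, F.natDegree = m - 1 ∧
      ∀ n : ℕ, 1 ≤ n →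
        (∑ i ∈ Finset.Icc 1 n, (i : ℚ) ^ (2 * m + 1)) =
          ((n : ℚ) * (n + 1) / 2) ^ 2 * F.eval ((n : ℚ) * (n + 1) / 2) := by
  obtain ⟨F, hF_deg, hF⟩ := exists_sum_Icc_pow_odd_eq_sq_mul_eval m hm
  exact ⟨F, hF_deg, fun n _ => hF n⟩
end

section
/- For integers m ≥ 1 and 0 ≤ j ≤ m, the coefficient b̂_j^{(2m)} in the expansion B_{2m}(x) = Σ_{j=0}^m b̂_j^{(2m)} U(x)^j, with U(x) = x(x-1)/2, is given by b̂_j^{(2m)} = 8^j Σ_{k=j}^m 4^{-k} C(2m,2k) C(k,j) B_{2m-2k}(1/2). -/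
/-!
Taylor-expanding `B_{2m}` at `1/2` gives `B_{2m}(t + 1/2) = ∑ C(2m,k) B_{2m-k}(1/2) t^k`,
since the Hasse derivatives of Bernoulli polynomials are `C(n,k) B_{n-k}`. The reflection
`B_n(1 - x) = (-1)^n B_n(x)` kills `B_n(1/2)` for odd `n`, so only even powers `t^{2k}` survive,
and `t^2 = (1 + 8U)/4` for `t = x - 1/2`; expanding `((1 + 8U)/4)^k` binomially and swapping the
two sums gives the coefficients.
-/

open Finset Polynomial

theorem Finset.sum_range_two_mul_add_one_of_odd_eq_zero {M : Type*} [AddCommMonoid M]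
    {f : ℕ → M} {m : ℕ} (hf : ∀ k ≤ 2 * m, Odd k → f k = 0) :
    ∑ k ∈ range (2 * m + 1), f k = ∑ k ∈ range (m + 1), f (2 * k) := by
  rw [← sum_image (fun a _ b _ h => by simpa using h : Set.InjOn (2 * ·) _)]
  refine (sum_subset (fun k hk => ?_) fun k hk hk' => ?_).symm
  · obtain ⟨i, hi, rfl⟩ := mem_image.1 hk
    simp only [mem_range] at hi ⊢; omega
  · simp only [mem_range] at hk
    refine hf k (by omega) (Nat.not_even_iff_odd.1 ?_)
    rintro ⟨i, rfl⟩
    exact hk' (mem_image.2 ⟨i, by simp only [mem_range]; omega, by omega⟩)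

namespace Polynomial

theorem iterate_derivative_bernoulli (k n : ℕ) :
    derivative^[k] (bernoulli n) = (n.descFactorial k : ℚ[X]) * bernoulli (n - k) := by
  induction k with
  | zero => simp
  | succ k ih =>
    rw [Function.iterate_succ_apply', ih, derivative_natCast_mul, derivative_bernoulli,
      Nat.descFactorial_succ, Nat.sub_sub]
    push_cast
    ring

theorem hasseDeriv_bernoulli (k n : ℕ) :
    hasseDeriv k (bernoulli n) = (n.choose k : ℚ[X]) * bernoulli (n - k) := by
  have h : k.factorial • hasseDeriv k (bernoulli n) = derivative^[k] (bernoulli n) := by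
    rw [← factorial_smul_hasseDeriv]; rfl
  rw [iterate_derivative_bernoulli, Nat.descFactorial_eq_factorial_mul_choose, nsmul_eq_mul,
    Nat.cast_mul, mul_assoc] at h
  exact mul_left_cancel₀ (Nat.cast_ne_zero.2 k.factorial_ne_zero) h

theorem natDegree_bernoulli_le_s14 (n : ℕ) : (bernoulli n).natDegree ≤ n :=
  natDegree_le_iff_coeff_eq_zero.2 fun i hi => by
    rw [coeff_bernoulli, if_neg (by exact_mod_cast hi.not_ge)]

theorem bernoulli_eval_add (n : ℕ) (x y : ℚ) :
    (bernoulli n).eval (x + y) =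
      ∑ k ∈ range (n + 1), n.choose k * (bernoulli (n - k)).eval y * x ^ k := by
  have hdeg : (taylor y (bernoulli n)).natDegree < n + 1 := by
    rw [natDegree_taylor]; exact Nat.lt_succ_of_le (natDegree_bernoulli_le_s14 n)
  rw [← taylor_eval, eval_eq_sum_range' hdeg]
  simp only [taylor_coeff, hasseDeriv_bernoulli, eval_mul, eval_natCast]

theorem bernoulli_eval_one_half_of_odd {n : ℕ} (hn : Odd n) :
    (bernoulli n).eval (1 / 2 : ℚ) = 0 := by
  have h := bernoulli_eval_one_sub n (1 / 2)
  rw [hn.neg_one_pow, show (1 : ℚ) - 1 / 2 = 1 / 2 by norm_num] at h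
  linarith

theorem bernoulli_two_mul_eval_add_one_half (m : ℕ) (t : ℚ) :
    (bernoulli (2 * m)).eval (t + 1 / 2) =
      ∑ k ∈ range (m + 1),
        ((2 * m).choose (2 * k) : ℚ) * (bernoulli (2 * m - 2 * k)).eval (1 / 2) *
          (t ^ 2) ^ k := by
  rw [bernoulli_eval_add, sum_range_two_mul_add_one_of_odd_eq_zero]
  · simp only [pow_mul]
  · intro k hk hodd
    rw [bernoulli_eval_one_half_of_odd (Nat.Even.sub_odd hk (even_two_mul m) hodd), mul_zero,
      zero_mul]

end Polynomial

theorem bernoulli_even_expansion_coeffs_general (m : ℕ) :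
    ∀ x : ℚ, (Polynomial.bernoulli (2 * m)).eval x =
      ∑ j ∈ Finset.range (m + 1),
        (8 ^ j * ∑ k ∈ Finset.Icc j m, (1 / 4 ^ k) * ((2 * m).choose (2 * k) : ℚ) *
          (k.choose j : ℚ) * (Polynomial.bernoulli (2 * m - 2 * k)).eval (1 / 2 : ℚ)) *
        (x * (x - 1) / 2) ^ j := by
  intro x
  have hpow : ∀ k, ((x - 1 / 2) ^ 2) ^ k =
      ∑ j ∈ range (k + 1),
        8 ^ j * (1 / 4 ^ k * (k.choose j : ℚ)) * (x * (x - 1) / 2) ^ j := by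
    intro k
    rw [show (x - 1 / 2) ^ 2 = (8 * (x * (x - 1) / 2) + 1) / 4 by ring, div_pow, add_pow, sum_div]
    refine sum_congr rfl fun j _ => ?_
    rw [mul_pow]
    ring
  have hB := bernoulli_two_mul_eval_add_one_half m (x - 1 / 2)
  rw [sub_add_cancel] at hB
  rw [hB]
  simp only [hpow, mul_sum, sum_mul]
  refine (sum_comm' fun k j => ?_).trans (sum_congr rfl fun j _ => sum_congr rfl fun k _ => ?_)
  · simp only [mem_range, mem_Icc]; omega
  · ring

theorem bernoulli_even_expansion_coeffs (m : ℕ) (hm : 1 ≤ m) :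
    ∀ x : ℚ, (Polynomial.bernoulli (2 * m)).eval x =
      ∑ j ∈ Finset.range (m + 1),
        (8 ^ j * ∑ k ∈ Finset.Icc j m, (1 / 4 ^ k) * ((2 * m).choose (2 * k) : ℚ) *
          (k.choose j : ℚ) * (Polynomial.bernoulli (2 * m - 2 * k)).eval (1 / 2 : ℚ)) *
        (x * (x - 1) / 2) ^ j :=
  bernoulli_even_expansion_coeffs_general m
end

section
/- In the Faulhaber expansions S_{2m} = S_2 Σ_{j=0}^{m-1} b_{m,j} S_1^j and S_{2m+1} = S_1^2 Σ_{j=0}^{m-1} c_{m,j} S_1^j (valid for all n ≥ 1, with S_k = Σ_{i=1}^n i^k), the coefficients satisfy c_{m,j} = ((4m+2)/(3j+6)) · b_{m,j} for all 0 ≤ j ≤ m-1 and m ≥ 1. -/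
/-!
For k ≥ 1 the power sum S_k(n) is the value at n of the polynomial
F_k = (B_{k+1}(X + 1) - B_{k+1}) / (k + 1), and F_{2m+1}' = (2m + 1) F_{2m} since B_{2m+1} = 0.
With U = (X² + X)/2 = F_1 one has F_2 = (2/3) U U'. The two expansions say F_{2m} = F_2 · P(U) and
F_{2m+1} = U² Q(U); differentiating the second gives U U' · (2Q + XQ')(U) = (4m + 2)/3 · U U' · P(U).
Cancelling U U' and using that composition with a nonconstant polynomial is injective,
2Q + XQ' = (4m + 2)/3 · P, whose j-th coefficient is (j + 2) c_j = (4m + 2)/3 · b_j.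
-/

open Polynomial Finset

namespace Faulhaber

section CommSemiring

variable {R : Type*} [CommSemiring R]

theorem coeff_sum_range_C_mul_X_pow (a : ℕ → R) {j m : ℕ} (hj : j < m) :
    (∑ k ∈ range m, C (a k) * X ^ k).coeff j = a j := by
  simp [finsetSum_coeff, hj]

theorem coeff_X_mul_derivative (p : R[X]) (n : ℕ) :
    (X * derivative p).coeff n = n * p.coeff n := by
  cases n with
  | zero => simp
  | succ n =>
    rw [coeff_X_mul, coeff_derivative]
    push_cast
    ring

end CommSemiring

section Domain

variable {R : Type*} [CommRing R] [IsDomain R]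

theorem eq_of_eval_natCast_eq [CharZero R] {p q : R[X]}
    (h : ∀ n : ℕ, 1 ≤ n → p.eval (n : R) = q.eval (n : R)) : p = q :=
  eq_of_infinite_eval_eq p q <| Set.infinite_of_injective_forall_mem
    (f := fun k : ℕ => ((k + 1 : ℕ) : R)) (Nat.cast_injective.comp (add_left_injective 1))
    fun k => h (k + 1) k.succ_pos

theorem eq_of_comp_eq_comp {U p q : R[X]} (hU : U.natDegree ≠ 0) (h : p.comp U = q.comp U) :
    p = q := by
  rw [← sub_eq_zero, ← sub_comp, comp_eq_zero_iff] at h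
  refine sub_eq_zero.mp (h.resolve_right fun ⟨_, hC⟩ => hU ?_)
  rw [hC, natDegree_C]

theorem two_mul_add_X_mul_derivative_eq_of_derivative [CharZero R] {U P Q : R[X]} {a : R}
    (hU : U.natDegree ≠ 0)
    (h : derivative (U ^ 2 * Q.comp U) = C a * U * derivative U * P.comp U) :
    2 * Q + X * derivative Q = C a * P := by
  have hU₀ : U ≠ 0 := by
    rintro rfl
    exact hU natDegree_zero
  apply eq_of_comp_eq_comp hU
  apply mul_left_cancel₀ (mul_ne_zero hU₀ (derivative_ne_zero.mpr hU))
  rw [derivative_mul, derivative_pow, derivative_comp, Nat.cast_ofNat, map_ofNat] at h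
  simp only [add_comp, mul_comp, ofNat_comp, X_comp, C_comp]
  linear_combination h

end Domain

noncomputable def powerSumPoly (k : ℕ) : ℚ[X] :=
  C (k + 1 : ℚ)⁻¹ * ((Polynomial.bernoulli (k + 1)).comp (X + 1) - C (_root_.bernoulli (k + 1)))

theorem eval_powerSumPoly {k : ℕ} (hk : k ≠ 0) (n : ℕ) :
    (powerSumPoly k).eval (n : ℚ) = ∑ i ∈ Icc 1 n, (i : ℚ) ^ k := by
  have h := sum_range_pow_eq_bernoulli_sub (n + 1) k
  rw [Nat.range_succ_eq_Icc_zero, Icc_eq_cons_Ioc n.zero_le, sum_cons,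
    ← Icc_add_one_left_eq_Ioc, zero_add, Nat.cast_zero, zero_pow hk, zero_add] at h
  simp only [powerSumPoly, eval_mul, eval_C, eval_sub, eval_comp, eval_add, eval_X, eval_one]
  push_cast at h
  rw [← h]
  field_simp

theorem derivative_powerSumPoly_succ (k : ℕ) :
    derivative (powerSumPoly (k + 1)) =
      C (k + 1 : ℚ) * powerSumPoly k + C (_root_.bernoulli (k + 1)) := by
  have hk : (k + 1 : ℚ) ≠ 0 := k.cast_add_one_ne_zero
  have hk' : ((k + 1 : ℕ) + 1 : ℚ) ≠ 0 := (k + 1).cast_add_one_ne_zero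
  calc derivative (powerSumPoly (k + 1))
      = (Polynomial.bernoulli (k + 1)).comp (X + 1) := by
        rw [powerSumPoly, derivative_C_mul, derivative_sub, derivative_C, sub_zero,
          derivative_comp, derivative_add, derivative_X, derivative_one, add_zero, one_mul,
          derivative_bernoulli_add_one, mul_comp, ← mul_assoc, add_comp, natCast_comp, one_comp,
          ← C_eq_natCast, ← C_1, ← C_add, ← C_mul, inv_mul_cancel₀ hk', C_1, one_mul]
    _ = C (k + 1 : ℚ) * powerSumPoly k + C (_root_.bernoulli (k + 1)) := by
        rw [powerSumPoly, ← mul_assoc, ← C_mul, mul_inv_cancel₀ hk, C_1, one_mul, sub_add_cancel]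

theorem derivative_powerSumPoly_two_mul_add_one {m : ℕ} (hm : m ≠ 0) :
    derivative (powerSumPoly (2 * m + 1)) = C (2 * m + 1 : ℚ) * powerSumPoly (2 * m) := by
  rw [derivative_powerSumPoly_succ, bernoulli_eq_zero_of_odd (odd_two_mul_add_one m) (by omega),
    C_0, add_zero, Nat.cast_mul, Nat.cast_ofNat]

noncomputable def triangularPoly : ℚ[X] := C 2⁻¹ * (X ^ 2 + X)

theorem natDegree_triangularPoly : triangularPoly.natDegree = 2 := by
  rw [triangularPoly, natDegree_C_mul (inv_ne_zero two_ne_zero)]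
  compute_degree!

theorem sum_Icc_one_natCast (n : ℕ) : ∑ i ∈ Icc 1 n, (i : ℚ) = ((n : ℚ) ^ 2 + n) / 2 := by
  induction n with
  | zero => simp
  | succ n ih =>
    rw [sum_Icc_succ_top (by omega), ih]
    push_cast
    ring

theorem sum_Icc_one_natCast_sq (n : ℕ) :
    ∑ i ∈ Icc 1 n, (i : ℚ) ^ 2 = (2 * (n : ℚ) ^ 3 + 3 * n ^ 2 + n) / 6 := by
  induction n with
  | zero => simp
  | succ n ih =>
    rw [sum_Icc_succ_top (by omega), ih]
    push_cast
    ring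

theorem eval_triangularPoly (n : ℕ) : triangularPoly.eval (n : ℚ) = ∑ i ∈ Icc 1 n, (i : ℚ) := by
  simp only [triangularPoly, eval_mul, eval_C, eval_add, eval_pow, eval_X, sum_Icc_one_natCast]
  ring

theorem powerSumPoly_two :
    powerSumPoly 2 = C (2 / 3) * triangularPoly * derivative triangularPoly := by
  refine eq_of_eval_natCast_eq fun n _ => ?_
  rw [eval_powerSumPoly two_ne_zero, sum_Icc_one_natCast_sq]
  simp only [triangularPoly, derivative_C_mul, derivative_add, derivative_X_pow, derivative_X,
    eval_mul, eval_C, eval_add, eval_pow, eval_X, eval_one]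
  ring

end Faulhaber

open Faulhaber in
theorem faulhaber_coeff_relation (m : ℕ) (hm : 1 ≤ m) (b c : ℕ → ℚ)
    (hb : ∀ n : ℕ, 1 ≤ n →
      (∑ i ∈ Finset.Icc 1 n, (i : ℚ) ^ (2 * m)) =
        (∑ i ∈ Finset.Icc 1 n, (i : ℚ) ^ 2) *
          ∑ j ∈ Finset.range m, b j * (∑ i ∈ Finset.Icc 1 n, (i : ℚ)) ^ j)
    (hc : ∀ n : ℕ, 1 ≤ n →
      (∑ i ∈ Finset.Icc 1 n, (i : ℚ) ^ (2 * m + 1)) =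
        (∑ i ∈ Finset.Icc 1 n, (i : ℚ)) ^ 2 *
          ∑ j ∈ Finset.range m, c j * (∑ i ∈ Finset.Icc 1 n, (i : ℚ)) ^ j) :
    ∀ j : ℕ, j ≤ m - 1 → c j = ((4 * m + 2 : ℚ) / (3 * j + 6)) * b j := by
  intro j hj
  set U := triangularPoly
  set P : ℚ[X] := ∑ k ∈ range m, C (b k) * X ^ k
  set Q : ℚ[X] := ∑ k ∈ range m, C (c k) * X ^ k
  have hP : powerSumPoly (2 * m) = powerSumPoly 2 * P.comp U :=
    eq_of_eval_natCast_eq fun n hn => by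
      rw [eval_mul, eval_comp, eval_powerSumPoly (by omega), eval_powerSumPoly two_ne_zero,
        eval_triangularPoly, hb n hn]
      simp [P, eval_finsetSum]
  have hQ : powerSumPoly (2 * m + 1) = U ^ 2 * Q.comp U :=
    eq_of_eval_natCast_eq fun n hn => by
      rw [eval_mul, eval_comp, eval_pow, eval_powerSumPoly (by omega), eval_triangularPoly,
        hc n hn]
      simp [Q, eval_finsetSum]
  have hderiv : derivative (U ^ 2 * Q.comp U) =
      C ((4 * m + 2 : ℚ) / 3) * U * derivative U * P.comp U := by
    rw [← hQ, derivative_powerSumPoly_two_mul_add_one (by omega), hP, powerSumPoly_two,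
      show (4 * m + 2 : ℚ) / 3 = (2 * m + 1) * (2 / 3) by ring, C_mul]
    ring
  have hcoeff := congrArg (coeff · j) <| two_mul_add_X_mul_derivative_eq_of_derivative
    (by rw [natDegree_triangularPoly]; exact two_ne_zero) hderiv
  have hjm : j < m := by omega
  simp only [coeff_add, coeff_ofNat_mul, coeff_C_mul, coeff_X_mul_derivative, P, Q,
    coeff_sum_range_C_mul_X_pow _ hjm] at hcoeff
  rw [div_mul_eq_mul_div, eq_div_iff (by positivity)]
  linear_combination 3 * hcoeff
end

section
/- For every integer m ≥ 1, in the Faulhaber expansion S_{2m} = S_2 Σ_{j=0}^{m-1} b_{m,j} S_1^j (valid for all n ≥ 1), the constant coefficient satisfies b_{m,0} = 6 B_{2m}, where B_{2m} is the Bernoulli number. -/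
/-!
The Bernoulli polynomials give a polynomial `F_p` with `F_p(n) = ∑_{i=1}^n i^p`, whose
constant coefficient vanishes and whose linear coefficient is `B_p` for `p ≠ 1`. With
`q = ∑_{j<m} b_j X^j`, the hypothesis says `F_{2m}` and `F_2 · q(F_1)` agree at infinitely
many points, so they are equal as polynomials. As `F_2` and `F_1` have no constant term, the
linear coefficient of the right side is `B_2 · q(0) = b_0 / 6`, while that of the left side
is `B_{2m}`.
-/

open Finset
open Polynomial hiding bernoulli

theorem Polynomial.eq_of_eval_natCast_eq {R : Type*} [CommRing R] [IsDomain R] [CharZero R]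
    {p q : R[X]} (N : ℕ) (h : ∀ n : ℕ, N ≤ n → p.eval (n : R) = q.eval (n : R)) : p = q :=
  eq_of_infinite_eval_eq p q <|
    Set.infinite_of_injective_forall_mem (f := fun n : ℕ => ((n + N : ℕ) : R))
      (Nat.cast_injective.comp (add_left_injective N)) fun n => h _ (Nat.le_add_left N n)

theorem Polynomial.coeff_mul_one_of_coeff_zero_eq_zero {R : Type*} [Semiring R] {p q : R[X]}
    (hp : p.coeff 0 = 0) : (p * q).coeff 1 = p.coeff 1 * q.coeff 0 := by
  simp [coeff_mul, Finset.Nat.antidiagonal_succ, hp]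

theorem sum_Icc_pow_eq_sum_range_add {R : Type*} [Semiring R] {p : ℕ} (hp : p ≠ 0) (n : ℕ) :
    ∑ i ∈ Icc 1 n, (i : R) ^ p = ∑ k ∈ range n, (k : R) ^ p + (n : R) ^ p := by
  rw [← sum_range_succ, sum_range_succ', ← Ico_add_one_right_eq_Icc, ← Nat.Ico_zero_eq_range,
    sum_Ico_add' (fun i : ℕ => (i : R) ^ p) 0 n 1]
  simp [hp]

/-- `(B_{p+1}(X) - B_{p+1}) / (p + 1)` sums `k^p` over `k < n` (`sum_range_pow_eq_bernoulli_sub`);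
the extra `X ^ p` moves the range to `1 ≤ i ≤ n`. -/
noncomputable def powerSumPoly (p : ℕ) : ℚ[X] :=
  C (p + 1 : ℚ)⁻¹ * (Polynomial.bernoulli (p + 1) - C (bernoulli (p + 1))) + X ^ p

theorem powerSumPoly_eval {p : ℕ} (hp : p ≠ 0) (n : ℕ) :
    (powerSumPoly p).eval (n : ℚ) = ∑ i ∈ Icc 1 n, (i : ℚ) ^ p := by
  have hp1 : (p + 1 : ℚ) ≠ 0 := by positivity
  rw [sum_Icc_pow_eq_sum_range_add hp, ← mul_div_cancel_left₀ (∑ k ∈ range n, (k : ℚ) ^ p) hp1,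
    sum_range_pow_eq_bernoulli_sub]
  simp [powerSumPoly, div_eq_inv_mul]

theorem powerSumPoly_coeff_zero {p : ℕ} (hp : p ≠ 0) : (powerSumPoly p).coeff 0 = 0 := by
  simpa [coeff_zero_eq_eval_zero] using powerSumPoly_eval hp 0

theorem powerSumPoly_coeff_one {p : ℕ} (hp : p ≠ 1) :
    (powerSumPoly p).coeff 1 = bernoulli p := by
  simp [powerSumPoly, coeff_bernoulli, coeff_X_pow, Ne.symm hp]
  field_simp

theorem faulhaber_even_constant_coeff (m : ℕ) (hm : 1 ≤ m) (b : ℕ → ℚ)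
    (hb : ∀ n : ℕ, 1 ≤ n →
      (∑ i ∈ Finset.Icc 1 n, (i : ℚ) ^ (2 * m)) =
        (∑ i ∈ Finset.Icc 1 n, (i : ℚ) ^ 2) *
          ∑ j ∈ Finset.range m, b j * (∑ i ∈ Finset.Icc 1 n, (i : ℚ)) ^ j) :
    b 0 = 6 * bernoulli (2 * m) := by
  set q : ℚ[X] := ∑ j ∈ range m, C (b j) * X ^ j
  have hfactor : powerSumPoly (2 * m) = powerSumPoly 2 * q.comp (powerSumPoly 1) :=
    eq_of_eval_natCast_eq 1 fun n hn => by
      rw [eval_mul, eval_comp, powerSumPoly_eval (by omega), powerSumPoly_eval two_ne_zero,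
        powerSumPoly_eval one_ne_zero, hb n hn]
      simp [q, eval_finsetSum]
  have hq : (q.comp (powerSumPoly 1)).coeff 0 = b 0 := by
    rw [coeff_zero_eq_eval_zero, eval_comp, ← coeff_zero_eq_eval_zero,
      powerSumPoly_coeff_zero one_ne_zero]
    simp [q, eval_finsetSum, zero_pow_eq, Nat.one_le_iff_ne_zero.mp hm]
  have hcoeff := congrArg (coeff · 1) hfactor
  simp only [coeff_mul_one_of_coeff_zero_eq_zero (powerSumPoly_coeff_zero two_ne_zero), hq,
    powerSumPoly_coeff_one (show 2 ≠ 1 by norm_num),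
    powerSumPoly_coeff_one (show 2 * m ≠ 1 by omega), bernoulli_two] at hcoeff
  linarith
end
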